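/- arXiv:1805.10877 — 7 statements merged into one kernel-verified Lean document; each statement's English description precedes it below -/
import Mathlib

section
/- For every positive integer n, ∑_{k=1}^n lcm(k,n) = (n/2)·(1 + ∑_{d∣n} d·φ(d)). -/
/-!
Writing `g = gcd k n`, every `k ∈ [1, n]` is `k = m * (n / d)` with `d = n / g` a divisor of `n`
and `m = k / g ∈ [1, d]` coprime to `d`, and then `lcm k n = n * m`. Hence the sum is
`n * ∑_{d ∣ n} S(d)`, where `S(d)` is the sum of the residues in `[1, d]` coprime to `d`. Pairing
`m` with `d - m` gives `2 S(d) = d φ(d)` for `d > 1`, while `S(1) = 1` supplies the extra `1`.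
-/

open Finset

namespace Nat

theorem gcd_mul_div_eq_div {m n d : ℕ} (hd : d ∣ n) (hm : d.Coprime m) :
    (m * (n / d)).gcd n = n / d := by
  nth_rw 2 [← Nat.mul_div_cancel' hd]
  rw [Nat.gcd_mul_right, hm.symm, one_mul]

theorem lcm_mul_div_eq_mul {m n d : ℕ} (hd : d ∣ n) (hm : d.Coprime m) :
    (m * (n / d)).lcm n = m * n := by
  nth_rw 2 [← Nat.mul_div_cancel' hd]
  rw [Nat.lcm_mul_right, hm.symm.lcm_eq_mul, mul_assoc, Nat.mul_div_cancel' hd]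

theorem sum_Icc_eq_sum_divisors_sum_coprime {M : Type*} [AddCommMonoid M] (n : ℕ) (g : ℕ → M) :
    ∑ k ∈ Icc 1 n, g k = ∑ d ∈ n.divisors, ∑ m ∈ Icc 1 d with d.Coprime m, g (m * (n / d)) := by
  rcases eq_or_ne n 0 with rfl | hn
  · simp
  have hinv (k : ℕ) : k / k.gcd n * (n / (n / k.gcd n)) = k := by
    rw [Nat.div_div_self (Nat.gcd_dvd_right k n) hn, Nat.div_mul_cancel (Nat.gcd_dvd_left k n)]
  have hquot {d : ℕ} (hd : d ∣ n) : 0 < n / d :=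
    Nat.div_pos (Nat.le_of_dvd (Nat.pos_of_ne_zero hn) hd)
      (Nat.pos_of_dvd_of_pos hd (Nat.pos_of_ne_zero hn))
  rw [sum_sigma']
  refine sum_nbij' (fun k => ⟨n / k.gcd n, k / k.gcd n⟩) (fun p => p.2 * (n / p.1))
    ?_ ?_ (fun k _ => hinv k) ?_ (fun k _ => congrArg g (hinv k).symm)
  · intro k hk
    have hg : 0 < k.gcd n := Nat.gcd_pos_of_pos_right _ (Nat.pos_of_ne_zero hn)
    simp only [mem_Icc] at hk
    simp only [mem_sigma, mem_divisors, mem_filter, mem_Icc]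
    refine ⟨⟨Nat.div_dvd_of_dvd (Nat.gcd_dvd_right k n), hn⟩,
      ⟨?_, Nat.div_le_div_right hk.2⟩, (Nat.coprime_div_gcd_div_gcd hg).symm⟩
    exact (Nat.one_le_div_iff hg).mpr (Nat.le_of_dvd (by omega) (Nat.gcd_dvd_left k n))
  · rintro ⟨d, m⟩ hp
    simp only [mem_sigma, mem_divisors, mem_filter, mem_Icc] at hp
    obtain ⟨⟨hd, -⟩, ⟨hm1, hmd⟩, -⟩ := hp
    simp only [mem_Icc]
    exact ⟨Nat.mul_pos hm1 (hquot hd),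
      (Nat.mul_le_mul_right _ hmd).trans (Nat.mul_div_cancel' hd).le⟩
  · rintro ⟨d, m⟩ hp
    simp only [mem_sigma, mem_divisors, mem_filter] at hp
    obtain ⟨⟨hd, -⟩, -, hdm⟩ := hp
    rw [gcd_mul_div_eq_div hd hdm, Nat.div_div_self hd hn, Nat.mul_div_cancel _ (hquot hd)]

theorem two_mul_sum_coprime_Icc (d : ℕ) :
    2 * ∑ m ∈ Icc 1 d with d.Coprime m, m = d * φ d + if d = 1 then 1 else 0 := by
  rcases eq_or_ne d 1 with rfl | hd1
  · decide
  rw [if_neg hd1, add_zero]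
  set s := {m ∈ Icc 1 d | d.Coprime m}
  have hmem : ∀ m ∈ s, 1 ≤ m ∧ m < d ∧ d.Coprime m := by
    intro m hm
    simp only [s, mem_filter, mem_Icc] at hm
    refine ⟨hm.1.1, lt_of_le_of_ne hm.1.2 ?_, hm.2⟩
    rintro rfl
    exact hd1 ((Nat.coprime_self m).mp hm.2)
  have hreflect_mem : ∀ m ∈ s, d - m ∈ s := by
    intro m hm
    obtain ⟨hm1, hmd, hdm⟩ := hmem m hm
    simp only [s, mem_filter, mem_Icc]
    exact ⟨⟨by omega, by omega⟩, (Nat.coprime_self_sub_right hmd.le).mpr hdm⟩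
  have hreflect : ∑ m ∈ s, (d - m) = ∑ m ∈ s, m :=
    sum_nbij' (d - ·) (d - ·) hreflect_mem hreflect_mem
      (fun m hm => by have := hmem m hm; omega) (fun m hm => by have := hmem m hm; omega)
      (fun _ _ => rfl)
  have hcard : s.card = φ d := by
    rw [← Nat.filter_coprime_Ico_eq_totient d 1, add_comm, Ico_add_one_right_eq_Icc]
  calc 2 * ∑ m ∈ s, m = ∑ m ∈ s, (m + (d - m)) := by rw [sum_add_distrib, hreflect, two_mul]
    _ = ∑ m ∈ s, d := sum_congr rfl fun m hm => by have := hmem m hm; omega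
    _ = d * φ d := by rw [sum_const, hcard, smul_eq_mul, mul_comm]

theorem two_mul_sum_lcm (n : ℕ) :
    2 * ∑ k ∈ Icc 1 n, k.lcm n = n * (1 + ∑ d ∈ n.divisors, d * φ d) := by
  rcases eq_or_ne n 0 with rfl | hn
  · simp
  calc 2 * ∑ k ∈ Icc 1 n, k.lcm n
      = ∑ d ∈ n.divisors, n * (2 * ∑ m ∈ Icc 1 d with d.Coprime m, m) := by
        rw [sum_Icc_eq_sum_divisors_sum_coprime, mul_sum]
        refine sum_congr rfl fun d hd => ?_
        rw [sum_congr rfl fun m hm => lcm_mul_div_eq_mul (dvd_of_mem_divisors hd)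
          (mem_filter.mp hm).2, ← sum_mul]
        ring
    _ = n * ∑ d ∈ n.divisors, (d * φ d + if d = 1 then 1 else 0) := by
        simp_rw [two_mul_sum_coprime_Icc, mul_sum]
    _ = n * (1 + ∑ d ∈ n.divisors, d * φ d) := by
        rw [sum_add_distrib, sum_ite_eq', if_pos (one_mem_divisors.mpr hn), add_comm]

end Nat

theorem lcm_sum_eq_general (n : ℕ) :
    (∑ k ∈ Finset.Icc 1 n, (Nat.lcm k n : ℝ)) =
      (n : ℝ) / 2 * (1 + ∑ d ∈ n.divisors, (d : ℝ) * Nat.totient d) := by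
  have h := congrArg (Nat.cast : ℕ → ℝ) (Nat.two_mul_sum_lcm n)
  push_cast at h
  linarith

theorem lcm_sum_eq (n : ℕ) (hn : 0 < n) :
    (∑ k ∈ Finset.Icc 1 n, (Nat.lcm k n : ℝ)) =
      (n : ℝ) / 2 * (1 + ∑ d ∈ n.divisors, (d : ℝ) * Nat.totient d) :=
  lcm_sum_eq_general n
end

section
/- Let k be a positive integer and define b_k(n) as the number of k-tuples (n_1,…,n_k) of positive integers with lcm(n_1,…,n_k) = n and gcd(n_1,…,n_k) = 1. Then for every positive integer n, ∑_{d∣n} b_k(d) = ∑_{δt=n} μ(δ)·τ(t)^k. -/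
/-!
A tuple with lcm `d ∣ n` is a tuple of divisors of `n`, and conversely every tuple of divisors
of `n` has lcm dividing `n`; so `∑_{d ∣ n} b_k(d)` counts the `k`-tuples of divisors of `n` with
gcd `1`. Möbius inversion over the gcd turns this into
`∑ μ(δ) · #{tuples of divisors of n all divisible by δ}`, and the tuples divisible by `δ` are `δ`
times the tuples of divisors of `n / δ`, of which there are `τ(n / δ)^k`.
-/

open Finset ArithmeticFunction Fintype
open scoped ArithmeticFunction.Moebius

namespace Nat

lemma sum_moebius_divisors (m : ℕ) :
    ∑ d ∈ m.divisors, (μ d : ℤ) = if m = 1 then 1 else 0 := by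
  rw [← coe_mul_zeta_apply, moebius_mul_coe_zeta, one_apply]

lemma card_divisors_filter_dvd {n δ : ℕ} (hn : n ≠ 0) (hδ : δ ∣ n) :
    #{e ∈ n.divisors | δ ∣ e} = #(n / δ).divisors := by
  obtain ⟨m, rfl⟩ := hδ
  have hδ0 : 0 < δ := pos_of_ne_zero (left_ne_zero_of_mul hn)
  rw [Nat.mul_div_cancel_left m hδ0]
  refine card_nbij' (· / δ) (δ * ·) ?_ ?_ ?_ ?_
  · rintro e he
    simp only [coe_filter, Set.mem_ofPred_eq, mem_divisors] at he
    obtain ⟨⟨hem, -⟩, e, rfl⟩ := he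
    simpa [Nat.mul_div_cancel_left e hδ0, right_ne_zero_of_mul hn] using
      (Nat.mul_dvd_mul_iff_left hδ0).1 hem
  · rintro e he
    simp only [mem_coe, mem_divisors] at he
    simpa [he.2, hn] using Nat.mul_dvd_mul_left δ he.1
  · rintro e he
    simp only [coe_filter, Set.mem_ofPred_eq] at he
    exact Nat.mul_div_cancel' he.2
  · rintro e -
    exact Nat.mul_div_cancel_left e hδ0

lemma card_filter_eq_one_eq_sum_moebius {α : Type*} (s : Finset α) (g : α → ℕ) {n : ℕ}
    (hn : n ≠ 0) (hg : ∀ x ∈ s, g x ∣ n) :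
    (#{x ∈ s | g x = 1} : ℤ) = ∑ δ ∈ n.divisors, μ δ * #{x ∈ s | δ ∣ g x} := by
  calc (#{x ∈ s | g x = 1} : ℤ)
      = ∑ x ∈ s, ∑ δ ∈ (g x).divisors, (μ δ : ℤ) := by
        simp only [sum_moebius_divisors, sum_boole]
    _ = ∑ x ∈ s, ∑ δ ∈ n.divisors, if δ ∣ g x then (μ δ : ℤ) else 0 := by
        refine sum_congr rfl fun x hx => ?_
        rw [← sum_filter, divisors_filter_dvd_of_dvd hn (hg x hx)]
    _ = ∑ δ ∈ n.divisors, μ δ * #{x ∈ s | δ ∣ g x} := by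
        rw [sum_comm]
        simp only [← sum_filter, sum_const, nsmul_eq_mul, mul_comm]

end Nat

section Tuples

variable {ι : Type*} [Fintype ι] [DecidableEq ι] {n : ℕ}

lemma lcm_mem_divisors_of_mem_piFinset {t : ι → ℕ} (hn : n ≠ 0)
    (ht : t ∈ piFinset fun _ => n.divisors) : univ.lcm t ∈ n.divisors :=
  Nat.mem_divisors.2 ⟨Finset.lcm_dvd fun i _ => Nat.dvd_of_mem_divisors (mem_piFinset.1 ht i), hn⟩

lemma Nat.card_lcm_eq_eq_card_filter_piFinset (p : (ι → ℕ) → Prop) [DecidablePred p] {d : ℕ}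
    (hn : n ≠ 0) (hd : d ∣ n) :
    Nat.card {t : ι → ℕ // (∀ i, 0 < t i) ∧ univ.lcm t = d ∧ p t} =
      #{t ∈ piFinset (fun _ => n.divisors) | univ.lcm t = d ∧ p t} := by
  rw [← Nat.card_eq_finsetCard]
  refine Nat.card_congr (Equiv.subtypeEquivRight fun t => ?_)
  simp only [mem_filter, mem_piFinset, Nat.mem_divisors, ne_eq, hn, not_false_eq_true, and_true]
  refine and_congr_left fun ⟨hlcm, _⟩ => forall_congr' fun i => ?_
  have hti : t i ∣ n := (hlcm ▸ Finset.dvd_lcm (mem_univ i)).trans hd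
  exact iff_of_true (Nat.pos_of_dvd_of_pos hti (Nat.pos_of_ne_zero hn)) hti

lemma sum_card_filter_lcm_eq (p : (ι → ℕ) → Prop) [DecidablePred p] (hn : n ≠ 0) :
    ∑ d ∈ n.divisors, #{t ∈ piFinset (fun _ => n.divisors) | univ.lcm t = d ∧ p t} =
      #{t ∈ piFinset (fun _ => n.divisors) | p t} := by
  rw [card_eq_sum_card_fiberwise fun t ht =>
    lcm_mem_divisors_of_mem_piFinset hn (mem_filter.1 ht).1]
  simp only [filter_filter, and_comm]

lemma card_piFinset_divisors_filter_dvd_gcd {δ : ℕ} (hn : n ≠ 0) (hδ : δ ∣ n) :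
    #{t ∈ piFinset (fun _ : ι => n.divisors) | δ ∣ univ.gcd t} = #(n / δ).divisors ^ card ι := by
  have : {t ∈ piFinset (fun _ : ι => n.divisors) | δ ∣ univ.gcd t} =
      piFinset fun _ => {e ∈ n.divisors | δ ∣ e} := by
    ext t
    simp [Finset.dvd_gcd_iff, forall_and]
  rw [this, card_piFinset, prod_const, Nat.card_divisors_filter_dvd hn hδ, card_univ]

end Tuples

theorem sum_divisors_card_unitary_lcm_tuples_general (k : ℕ) (hk : 0 < k) (n : ℕ) :
    ∑ d ∈ n.divisors,
        (Nat.card {t : Fin k → ℕ // (∀ i, 0 < t i) ∧ Finset.univ.lcm t = d ∧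
          Finset.univ.gcd t = 1} : ℤ) =
      ∑ d ∈ n.divisors, ArithmeticFunction.moebius d * ((n / d).divisors.card : ℤ) ^ k := by
  rcases eq_or_ne n 0 with rfl | hn
  · simp
  set T := piFinset fun _ : Fin k => n.divisors
  have hgcd : ∀ t ∈ T, univ.gcd t ∣ n := fun t ht =>
    (gcd_dvd (mem_univ ⟨0, hk⟩)).trans (Nat.dvd_of_mem_divisors (mem_piFinset.1 ht _))
  calc _ = ∑ d ∈ n.divisors, (#{t ∈ T | univ.lcm t = d ∧ univ.gcd t = 1} : ℤ) :=
        sum_congr rfl fun d hd => by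
          rw [Nat.card_lcm_eq_eq_card_filter_piFinset _ hn (Nat.dvd_of_mem_divisors hd)]
    _ = #{t ∈ T | univ.gcd t = 1} := by rw [← Nat.cast_sum, sum_card_filter_lcm_eq _ hn]
    _ = ∑ δ ∈ n.divisors, μ δ * #{t ∈ T | δ ∣ univ.gcd t} :=
        Nat.card_filter_eq_one_eq_sum_moebius T _ hn hgcd
    _ = _ := sum_congr rfl fun δ hδ => by
        rw [card_piFinset_divisors_filter_dvd_gcd hn (Nat.dvd_of_mem_divisors hδ),
          Fintype.card_fin, Nat.cast_pow]

theorem sum_divisors_card_unitary_lcm_tuples (k : ℕ) (hk : 0 < k) (n : ℕ) (hn : 0 < n) :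
    ∑ d ∈ n.divisors,
        (Nat.card {t : Fin k → ℕ // (∀ i, 0 < t i) ∧ Finset.univ.lcm t = d ∧
          Finset.univ.gcd t = 1} : ℤ) =
      ∑ d ∈ n.divisors, ArithmeticFunction.moebius d * ((n / d).divisors.card : ℤ) ^ k :=
  sum_divisors_card_unitary_lcm_tuples_general k hk n
end

section
/- For every positive integer k ≥ 2, every prime p, and every positive integer ν, the number of k-tuples (n_1,…,n_k) of positive integers with lcm(n_1,…,n_k) = p^ν and gcd(n_1,…,n_k) = 1 equals (ν+1)^k − 2ν^k + (ν−1)^k. -/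
theorem card_unitary_lcm_tuples_prime_pow (k : ℕ) (hk : 2 ≤ k) (p : ℕ) (hp : p.Prime)
    (ν : ℕ) (hν : 0 < ν) :
    (Nat.card {t : Fin k → ℕ // (∀ i, 0 < t i) ∧ Finset.univ.lcm t = p ^ ν ∧
        Finset.univ.gcd t = 1} : ℤ) =
      ((ν : ℤ) + 1) ^ k - 2 * (ν : ℤ) ^ k + ((ν : ℤ) - 1) ^ k := by
  classical
  have h0mem0 : (0 : Fin (ν+1)) ∈ Finset.univ.erase (Fin.last ν) := by
    refine Finset.mem_erase.mpr ⟨?_, Finset.mem_univ _⟩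
    intro hc
    have h := congrArg Fin.val hc
    simp [Fin.val_last] at h
    omega
  have e1 : ((ν : ℤ) + 1) ^ k = (((ν + 1) ^ k : ℕ) : ℤ) := by push_cast; ring
  have e2 : ((ν : ℤ)) ^ k = ((ν ^ k : ℕ) : ℤ) := by push_cast; ring
  have e3 : ((ν : ℤ) - 1) ^ k = ((((ν - 1) ^ k : ℕ)) : ℤ) := by
    have hcast : ((ν : ℤ) - 1) = (((ν - 1 : ℕ)) : ℤ) := by omega
    rw [hcast]; push_cast; ring
  have hpinj : Function.Injective (fun n : ℕ => p ^ n) := Nat.pow_right_injective hp.two_le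
  set A := {a : Fin k → Fin (ν+1) // (∃ i, (a i : ℕ) = ν) ∧ ∃ i, (a i : ℕ) = 0} with hA
  -- the bijection
  have key : Nat.card {t : Fin k → ℕ // (∀ i, 0 < t i) ∧ Finset.univ.lcm t = p ^ ν ∧
      Finset.univ.gcd t = 1} = Nat.card A := by
    have hf : ∀ a : Fin k → Fin (ν+1), (∃ i, (a i : ℕ) = ν) → (∃ i, (a i : ℕ) = 0) →
        (∀ i, 0 < p ^ ((a i : ℕ))) ∧
        Finset.univ.lcm (fun i => p ^ ((a i : ℕ))) = p ^ ν ∧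
        Finset.univ.gcd (fun i => p ^ ((a i : ℕ))) = 1 := by
      rintro a ⟨i₀, hi₀⟩ ⟨j₀, hj₀⟩
      refine ⟨fun i => pow_pos hp.pos _, ?_, ?_⟩
      · apply Nat.dvd_antisymm
        · apply Finset.lcm_dvd
          intro i _
          exact pow_dvd_pow p (Nat.le_of_lt_succ (a i).2)
        · have := Finset.dvd_lcm (s := Finset.univ)
            (f := fun i => p ^ ((a i : ℕ))) (Finset.mem_univ i₀)
          simpa [hi₀] using this
      · have hd : (Finset.univ.gcd fun i => p ^ ((a i : ℕ))) ∣ p ^ ((a j₀ : ℕ)) :=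
          Finset.gcd_dvd (Finset.mem_univ j₀)
        rw [hj₀, pow_zero] at hd
        exact Nat.dvd_one.mp hd
    set f : A → {t : Fin k → ℕ // (∀ i, 0 < t i) ∧ Finset.univ.lcm t = p ^ ν ∧
        Finset.univ.gcd t = 1} :=
      fun a => ⟨fun i => p ^ ((a.1 i : ℕ)), hf a.1 a.2.1 a.2.2⟩ with hfdef
    have hbij : Function.Bijective f := by
      constructor
      · rintro ⟨a, ha⟩ ⟨b, hb⟩ hab
        have h1 : ∀ i, p ^ ((a i : ℕ)) = p ^ ((b i : ℕ)) := fun i =>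
          congrFun (congrArg Subtype.val hab) i
        have h2 : ∀ i, (a i : ℕ) = (b i : ℕ) := fun i => hpinj (h1 i)
        exact Subtype.ext (funext fun i => Fin.ext (h2 i))
      · rintro ⟨t, hpos, hlcm, hgcd⟩
        have hdvd : ∀ i, t i ∣ p ^ ν := fun i => hlcm ▸ Finset.dvd_lcm (Finset.mem_univ i)
        have hex : ∀ i, ∃ m ≤ ν, t i = p ^ m := fun i => (Nat.dvd_prime_pow hp).mp (hdvd i)
        choose e he hte using hex
        set a : Fin k → Fin (ν+1) := fun i => ⟨e i, Nat.lt_succ_of_le (he i)⟩ with hadef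
        have hmax : ∃ i, (a i : ℕ) = ν := by
          by_contra h
          push_neg at h
          have hlt : ∀ i, e i ≤ ν - 1 := by
            intro i
            have h' : (a i : ℕ) ≠ ν := h i
            have : e i ≠ ν := h'
            have := he i
            omega
          have hd : Finset.univ.lcm t ∣ p ^ (ν - 1) := by
            apply Finset.lcm_dvd
            intro i _
            rw [hte i]
            exact pow_dvd_pow p (hlt i)
          rw [hlcm] at hd
          have := (Nat.pow_dvd_pow_iff_le_right hp.one_lt).mp hd
          omega
        have hmin : ∃ i, (a i : ℕ) = 0 := by
          by_contra h
          push_neg at h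
          have hd : p ∣ Finset.univ.gcd t := by
            apply Finset.dvd_gcd
            intro i _
            rw [hte i]
            exact dvd_pow_self p (h i)
          rw [hgcd] at hd
          exact Nat.Prime.one_lt hp |>.ne' (Nat.dvd_one.mp hd)
        refine ⟨⟨a, hmax, hmin⟩, ?_⟩
        apply Subtype.ext
        funext i
        simp only [hfdef]
        exact (hte i).symm
    exact (Nat.card_eq_of_bijective f hbij).symm
  rw [key]
  -- now count A
  have hcard : Nat.card A = Fintype.card A := Nat.card_eq_fintype_card
  rw [hcard, Fintype.card_subtype]
  -- inclusion-exclusion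
  set P : (Fin k → Fin (ν+1)) → Prop := fun a => ∀ i, (a i : ℕ) ≠ ν with hP
  set Q : (Fin k → Fin (ν+1)) → Prop := fun a => ∀ i, (a i : ℕ) ≠ 0 with hQ
  have hsplit : (Finset.univ.filter (fun a : Fin k → Fin (ν+1) =>
      (∃ i, (a i : ℕ) = ν) ∧ ∃ i, (a i : ℕ) = 0)) =
      Finset.univ \ (Finset.univ.filter P ∪ Finset.univ.filter Q) := by
    ext a
    simp only [Finset.mem_filter, Finset.mem_univ, true_and, Finset.mem_sdiff,
      Finset.mem_union, hP, hQ]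
    push_neg
    tauto
  rw [hsplit]
  have hlastval : ((Fin.last ν : Fin (ν+1)) : ℕ) = ν := rfl
  have hzeroval : ((0 : Fin (ν+1)) : ℕ) = 0 := rfl
  have hcardP : (Finset.univ.filter P).card = ν ^ k := by
    have heq : Finset.univ.filter P = Fintype.piFinset (fun _ : Fin k =>
        Finset.univ.erase (Fin.last ν)) := by
      ext a
      simp only [Finset.mem_filter, Finset.mem_univ, true_and, Fintype.mem_piFinset,
        Finset.mem_erase, hP, and_true]
      constructor
      · intro h i hc
        exact h i (by rw [hc]; rfl)
      · intro h i hc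
        exact h i (Fin.ext (by simpa using hc))
    rw [heq, Fintype.card_piFinset]
    simp [Finset.card_erase_of_mem]
  have hcardQ : (Finset.univ.filter Q).card = ν ^ k := by
    have heq : Finset.univ.filter Q = Fintype.piFinset (fun _ : Fin k =>
        Finset.univ.erase (0 : Fin (ν+1))) := by
      ext a
      simp only [Finset.mem_filter, Finset.mem_univ, true_and, Fintype.mem_piFinset,
        Finset.mem_erase, hQ, and_true]
      constructor
      · intro h i hc
        exact h i (by rw [hc]; rfl)
      · intro h i hc
        exact h i (Fin.ext (by simpa using hc))
    rw [heq, Fintype.card_piFinset]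
    simp [Finset.card_erase_of_mem]
  have hcardPQ : (Finset.univ.filter P ∩ Finset.univ.filter Q).card = (ν - 1) ^ k := by
    have heq : Finset.univ.filter P ∩ Finset.univ.filter Q =
        Fintype.piFinset (fun _ : Fin k =>
          (Finset.univ.erase (Fin.last ν)).erase (0 : Fin (ν+1))) := by
      ext a
      simp only [Finset.mem_inter, Finset.mem_filter, Finset.mem_univ, true_and,
        Fintype.mem_piFinset, Finset.mem_erase, hP, hQ, and_true]
      constructor
      · intro ⟨h1, h2⟩ i
        exact ⟨fun hc => h2 i (by rw [hc]; rfl), fun hc => h1 i (by rw [hc]; rfl)⟩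
      · intro h
        exact ⟨fun i hc => (h i).2 (Fin.ext (by simpa using hc)),
          fun i hc => (h i).1 (Fin.ext (by simpa using hc))⟩
    rw [heq, Fintype.card_piFinset]
    have h0mem := h0mem0
    have hc2 : ((Finset.univ.erase (Fin.last ν)).erase (0 : Fin (ν+1))).card = ν - 1 := by
      rw [Finset.card_erase_of_mem h0mem, Finset.card_erase_of_mem (Finset.mem_univ _)]
      simp
    simp [hc2]
  have hunion : (Finset.univ.filter P ∪ Finset.univ.filter Q).card +
      (Finset.univ.filter P ∩ Finset.univ.filter Q).card =
      (Finset.univ.filter P).card + (Finset.univ.filter Q).card :=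
    Finset.card_union_add_card_inter _ _
  have hsub : Finset.univ.filter P ∪ Finset.univ.filter Q ⊆
      (Finset.univ : Finset (Fin k → Fin (ν+1))) := Finset.subset_univ _
  have hsdiff : (Finset.univ \ (Finset.univ.filter P ∪ Finset.univ.filter Q)).card =
      Finset.univ.card - (Finset.univ.filter P ∪ Finset.univ.filter Q).card :=
    Finset.card_sdiff_of_subset hsub
  have htot : (Finset.univ : Finset (Fin k → Fin (ν+1))).card = (ν + 1) ^ k := by
    simp [Finset.card_univ]
  have hle : (Finset.univ.filter P ∪ Finset.univ.filter Q).card ≤ (ν + 1) ^ k := by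
    rw [← htot]; exact Finset.card_le_card hsub
  rw [hsdiff, htot]
  rw [hcardP, hcardQ, hcardPQ] at hunion
  rw [e1, e2, e3]
  generalize hU : (Finset.univ.filter P ∪ Finset.univ.filter Q).card = U at hunion hle ⊢
  clear hcardP hcardQ hcardPQ hsdiff hsplit htot hsub key hcard hU
  omega
end

section
/- ∑_{n=1}^∞ H_n/n² = 2ζ(3), where H_n = ∑_{j=1}^n 1/j is the n-th harmonic number. -/
/-!
Let `S = ∑_{n,m ≥ 1} 1 / (n m (n + m))`, which converges absolutely since
`n m (n + m) ≥ (n m)^{3/2}`. Summing row by row, `1 / (n m (n + m)) = (1/m - 1/(m + n)) / n²`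
telescopes in `m` to `H_n / n²`, so `S = ∑ H_n / n²`. Summing along the diagonals `n + m = k`
instead, `1 / (n m) = (1/n + 1/m) / k` gives `2 H_{k-1} / k² = 2 (H_k / k² - 1 / k³)`, so
`S = 2 (S - ζ(3))`.
-/

open Finset Filter Topology

theorem Summable.tsum_sub_succ_eq_of_tendsto {G : Type*} [AddCommGroup G] [TopologicalSpace G]
    [ContinuousSub G] [T2Space G] {g : ℕ → G} {l : G}
    (hs : Summable fun n => g n - g (n + 1)) (hg : Tendsto g atTop (𝓝 l)) :
    ∑' n, (g n - g (n + 1)) = g 0 - l := by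
  refine (hs.hasSum_iff_tendsto_nat.mpr ?_).tsum_eq
  simp only [Finset.sum_range_sub']
  exact tendsto_const_nhds.sub hg

theorem Summable.tsum_eq_tsum_sum_antidiagonal {A α : Type*} [AddCommMonoid A]
    [HasAntidiagonal A] [AddCommMonoid α] [TopologicalSpace α] [ContinuousAdd α] [T3Space α]
    {F : A × A → α} (hF : Summable F) :
    ∑' p, F p = ∑' n, ∑ p ∈ antidiagonal n, F p := by
  have hσ : Summable fun c => F (HasAntidiagonal.sigmaAntidiagonalEquivProd c) :=
    (Equiv.summable_iff _).mpr hF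
  rw [← HasAntidiagonal.sigmaAntidiagonalEquivProd.tsum_eq, hσ.tsum_sigma' fun _ => .of_finite]
  exact tsum_congr fun n => Finset.tsum_subtype (antidiagonal n) F

lemma one_div_mul_mul_add_le_rpow {a b : ℝ} (ha : 0 ≤ a) (hb : 0 ≤ b) :
    1 / (a * b * (a + b)) ≤ 1 / a ^ (3 / 2 : ℝ) * (1 / b ^ (3 / 2 : ℝ)) := by
  rcases ha.eq_or_lt with rfl | ha
  · simp
  rcases hb.eq_or_lt with rfl | hb
  · simp
  have hab : 0 < a * b := mul_pos ha hb
  have hsqrt : √(a * b) ≤ a + b :=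
    Real.sqrt_le_iff.mpr ⟨by positivity, by nlinarith [sq_nonneg (a - b)]⟩
  rw [div_mul_div_comm, one_mul, ← Real.mul_rpow ha.le hb.le]
  refine one_div_le_one_div_of_le (by positivity) ?_
  calc (a * b) ^ (3 / 2 : ℝ) = a * b * √(a * b) := by
        rw [show (3 / 2 : ℝ) = 1 + 1 / 2 by norm_num, Real.rpow_add hab, Real.rpow_one,
          Real.sqrt_eq_rpow]
    _ ≤ a * b * (a + b) := by gcongr

/-- Since `1 / 0 = 0`, the terms with a zero index vanish. -/
noncomputable def eulerTerm (p : ℕ × ℕ) : ℝ := 1 / (p.1 * p.2 * (p.1 + p.2))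

theorem summable_eulerTerm : Summable eulerTerm := by
  have h : Summable fun n : ℕ => 1 / (n : ℝ) ^ (3 / 2 : ℝ) :=
    Real.summable_one_div_nat_rpow.mpr (by norm_num)
  refine Summable.of_nonneg_of_le (fun p => by unfold eulerTerm; positivity)
    (fun p => one_div_mul_mul_add_le_rpow p.1.cast_nonneg p.2.cast_nonneg)
    (h.mul_of_nonneg h (fun _ => by positivity) (fun _ => by positivity))

theorem tsum_eulerTerm_right (n : ℕ) :
    ∑' m, eulerTerm (n, m) = harmonic n / (n : ℝ) ^ 2 := by
  rcases eq_or_ne n 0 with rfl | hn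
  · simp [eulerTerm]
  have hn' : (n : ℝ) ≠ 0 := by exact_mod_cast hn
  -- `g M = (H_{M+n} - H_M) / n²`, the tail of the row beyond `M`.
  let g : ℕ → ℝ := fun M => (∑ i ∈ range n, 1 / ((M : ℝ) + i + 1)) / (n : ℝ) ^ 2
  have htelescope (m : ℕ) :
      g m - g (m + 1) = (1 / ((m : ℝ) + 1) - 1 / ((m : ℝ) + n + 1)) / (n : ℝ) ^ 2 := by
    have h := Finset.sum_range_sub' (fun i : ℕ => 1 / ((m : ℝ) + i + 1)) n
    simp only [g, ← sub_div, ← Finset.sum_sub_distrib]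
    push_cast at h ⊢
    rw [add_zero] at h
    rw [← h]
    exact congrArg (· / _) (Finset.sum_congr rfl fun i _ => by ring_nf)
  have hterm (m : ℕ) : eulerTerm (n, m + 1) = g m - g (m + 1) := by
    rw [htelescope]
    simp only [eulerTerm]
    push_cast
    field_simp
    ring
  have hg_zero : g 0 = harmonic n / (n : ℝ) ^ 2 := by simp [g, harmonic, add_comm]
  have hg_lim : Tendsto g atTop (𝓝 0) := by
    rw [← zero_div ((n : ℝ) ^ 2), ← Finset.sum_const_zero (s := range n)]
    refine (tendsto_finsetSum _ fun i _ => ?_).div_const _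
    have := (tendsto_one_div_add_atTop_nhds_zero_nat (𝕜 := ℝ)).comp (tendsto_add_atTop_nat i)
    simpa [Function.comp_def, add_right_comm] using this
  have hsum : Summable fun m => g m - g (m + 1) :=
    ((summable_nat_add_iff 1).mpr (summable_eulerTerm.prod_factor n)).congr hterm
  calc ∑' m, eulerTerm (n, m) = ∑' m, eulerTerm (n, m + 1) := by
        rw [tsum_eq_zero_add' (hsum.congr fun m => (hterm m).symm)]
        simp [eulerTerm]
    _ = g 0 - 0 := by simp_rw [hterm]; exact hsum.tsum_sub_succ_eq_of_tendsto hg_lim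
    _ = harmonic n / (n : ℝ) ^ 2 := by rw [hg_zero, sub_zero]

lemma eulerTerm_succ_succ (i j : ℕ) :
    eulerTerm (i + 1, j + 1) =
      (1 / ((i : ℝ) + 1) + 1 / ((j : ℝ) + 1)) / ((i + j + 2 : ℕ) : ℝ) ^ 2 := by
  simp only [eulerTerm]
  push_cast
  field_simp
  ring

theorem sum_antidiagonal_eulerTerm (k : ℕ) :
    ∑ p ∈ antidiagonal k, eulerTerm p = 2 * (harmonic k / (k : ℝ) ^ 2 - 1 / (k : ℝ) ^ 3) := by
  match k with
  | 0 => simp [eulerTerm]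
  | 1 => simp [Finset.Nat.sum_antidiagonal_succ, eulerTerm]
  | n + 2 =>
    have hfst : ∑ p ∈ antidiagonal n, 1 / ((p.1 : ℝ) + 1) = harmonic (n + 1) := by
      rw [Finset.Nat.sum_antidiagonal_eq_sum_range_succ_mk]
      simp [harmonic]
    have hsnd : ∑ p ∈ antidiagonal n, 1 / ((p.2 : ℝ) + 1) = harmonic (n + 1) := by
      rw [← hfst, ← Finset.Nat.sum_antidiagonal_swap]
      rfl
    have hinner : ∀ p ∈ antidiagonal n, eulerTerm (p.1 + 1, p.2 + 1) =
        (1 / ((p.1 : ℝ) + 1) + 1 / ((p.2 : ℝ) + 1)) / ((n + 2 : ℕ) : ℝ) ^ 2 := by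
      intro p hp
      rw [eulerTerm_succ_succ, mem_antidiagonal.mp hp]
    rw [Finset.Nat.sum_antidiagonal_succ, Finset.Nat.sum_antidiagonal_succ']
    dsimp only
    rw [sum_congr rfl hinner, ← sum_div, sum_add_distrib, hfst, hsnd, harmonic_succ (n + 1)]
    simp only [eulerTerm]
    push_cast
    field_simp
    ring

theorem euler_harmonic_zeta_three :
    ∑' n : ℕ, (∑ j ∈ Finset.Icc 1 n, (1 : ℝ) / j) / (n : ℝ) ^ 2 =
      2 * ∑' n : ℕ, (1 : ℝ) / (n : ℝ) ^ 3 := by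
  have hharmonic (n : ℕ) : ∑ j ∈ Icc 1 n, (1 : ℝ) / j = harmonic n := by
    simp [harmonic_eq_sum_Icc]
  simp_rw [hharmonic]
  have hS : Summable fun n : ℕ => (harmonic n : ℝ) / (n : ℝ) ^ 2 :=
    summable_eulerTerm.prod.congr tsum_eulerTerm_right
  have hZ : Summable fun n : ℕ => 1 / (n : ℝ) ^ 3 :=
    Real.summable_one_div_nat_pow.mpr (by norm_num)
  have hrows : ∑' p, eulerTerm p = ∑' n : ℕ, (harmonic n : ℝ) / (n : ℝ) ^ 2 := by
    rw [summable_eulerTerm.tsum_prod]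
    exact tsum_congr tsum_eulerTerm_right
  have hdiagonals : ∑' p, eulerTerm p =
      2 * (∑' n : ℕ, (harmonic n : ℝ) / (n : ℝ) ^ 2 - ∑' n : ℕ, 1 / (n : ℝ) ^ 3) := by
    simp_rw [summable_eulerTerm.tsum_eq_tsum_sum_antidiagonal, sum_antidiagonal_eulerTerm,
      tsum_mul_left, hS.tsum_sub hZ]
  linarith
end

section
/- ∑_{m,n=1}^∞ 1/(m·n·max(m,n)) = 3ζ(3). -/
open Filter Finset Function Topology

noncomputable section
namespace DSM

def b (k : ℕ) : ℝ := 1 / ((k : ℝ) + 1)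

lemma b_nonneg (k : ℕ) : 0 ≤ b k := by unfold b; positivity

lemma b_anti {j k : ℕ} (h : j ≤ k) : b k ≤ b j := by
  unfold b
  apply one_div_le_one_div_of_le (by positivity)
  have : (j : ℝ) ≤ k := by exact_mod_cast h
  linarith

lemma partial_eq (n M : ℕ) :
    ∑ m ∈ range M, (b m - b (m + n)) =
      ∑ k ∈ range n, b k - ∑ k ∈ range n, b (M + k) := by
  induction M with
  | zero => simp
  | succ M ih =>
    rw [sum_range_succ, ih]
    have h : ∑ k ∈ range n, b (M + k) - ∑ k ∈ range n, b (M + 1 + k)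
        = b M - b (M + n) := by
      rw [← Finset.sum_sub_distrib]
      have h2 := Finset.sum_range_sub' (f := fun k => b (M + k)) n
      have h2' : ∑ i ∈ range n, (b (M + i) - b (M + (i + 1))) = b M - b (M + n) := by
        simpa using h2
      rw [← h2']
      apply Finset.sum_congr rfl
      intro i _
      congr 2
      omega
    linarith

lemma telescope (n : ℕ) :
    HasSum (fun m => b m - b (m + n)) (∑ k ∈ range n, b k) := by
  rw [hasSum_iff_tendsto_nat_of_nonneg
    (fun m => sub_nonneg.mpr (b_anti (Nat.le_add_right m n)))]
  have hlim : Tendsto (fun M => ∑ k ∈ range n, b (M + k)) atTop (𝓝 0) := by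
    have : Tendsto (fun M => ∑ k ∈ range n, b (M + k)) atTop (𝓝 (∑ k ∈ range n, (0:ℝ))) := by
      apply tendsto_finset_sum
      intro k _
      have hb : Tendsto b atTop (𝓝 (0:ℝ)) := by
        unfold b; exact tendsto_one_div_add_atTop_nhds_zero_nat
      exact (tendsto_add_atTop_iff_nat k).2 hb
    simpa using this
  have := (tendsto_const_nhds (x := ∑ k ∈ range n, b k)).sub hlim
  rw [sub_zero] at this
  apply this.congr
  intro M
  rw [partial_eq]

def r (m : ℕ) : ℝ := 1 / ((m : ℝ) * Real.sqrt m)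

lemma r_nonneg (m : ℕ) : 0 ≤ r m := by
  unfold r; positivity

lemma r_eq (m : ℕ) : r m = 1 / (m : ℝ) ^ ((3:ℝ)/2) := by
  unfold r
  rcases Nat.eq_zero_or_pos m with h | h
  · simp [h, Real.zero_rpow (by norm_num : (3:ℝ)/2 ≠ 0)]
  · have hm : (0:ℝ) < m := by exact_mod_cast h
    congr 1
    rw [show ((3:ℝ)/2) = 1 + 1/2 by norm_num, Real.rpow_add hm, Real.rpow_one,
      ← Real.sqrt_eq_rpow]

lemma r_summable : Summable r := by
  have := Real.summable_one_div_nat_rpow.mpr (by norm_num : (1:ℝ) < 3/2)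
  exact this.congr fun m => (r_eq m).symm

lemma rr_summable : Summable (fun p : ℕ × ℕ => r p.1 * r p.2) :=
  r_summable.mul_of_nonneg r_summable r_nonneg r_nonneg

lemma key (m n : ℕ) (D : ℝ) (hD : Real.sqrt ((m : ℝ) * n) ≤ D) :
    1 / ((m : ℝ) * n * D) ≤ r m * r n := by
  rcases Nat.eq_zero_or_pos m with h | hm
  · simp [h, r]
  rcases Nat.eq_zero_or_pos n with h | hn
  · simp [h, r]
  have hm' : (0:ℝ) < m := by exact_mod_cast hm
  have hn' : (0:ℝ) < n := by exact_mod_cast hn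
  have hs : 0 < Real.sqrt ((m : ℝ) * n) := Real.sqrt_pos.mpr (by positivity)
  have hrr : r m * r n = 1 / ((m : ℝ) * n * Real.sqrt ((m : ℝ) * n)) := by
    unfold r
    rw [Real.sqrt_mul (le_of_lt hm')]
    rw [div_mul_div_comm, one_mul]
    ring_nf
  rw [hrr]
  apply one_div_le_one_div_of_le (by positivity)
  have : (0:ℝ) ≤ (m : ℝ) * n := by positivity
  nlinarith [hs]

lemma sqrt_le_max (m n : ℕ) : Real.sqrt ((m : ℝ) * n) ≤ (max m n : ℕ) := by
  have h1 : (m : ℝ) ≤ (max m n : ℕ) := by exact_mod_cast Nat.le_max_left m n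
  have h2 : (n : ℝ) ≤ (max m n : ℕ) := by exact_mod_cast Nat.le_max_right m n
  have h0 : (0:ℝ) ≤ (max m n : ℕ) := by positivity
  calc Real.sqrt ((m : ℝ) * n) ≤ Real.sqrt (((max m n : ℕ):ℝ) * (max m n : ℕ)) := by
        apply Real.sqrt_le_sqrt
        apply mul_le_mul h1 h2 (by positivity) h0
    _ = (max m n : ℕ) := by rw [Real.sqrt_mul_self h0]

lemma sqrt_le_add (m n : ℕ) : Real.sqrt ((m : ℝ) * n) ≤ (m : ℝ) + n := by
  apply le_trans (sqrt_le_max m n)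
  have : (max m n : ℕ) ≤ m + n := by omega
  exact_mod_cast this

def t : ℕ × ℕ → ℝ := fun p => 1 / ((p.1 : ℝ) * p.2 * ((p.1 : ℝ) + p.2))

lemma t_nonneg (p : ℕ × ℕ) : 0 ≤ t p := by unfold t; positivity

lemma t_summable : Summable t := by
  apply rr_summable.of_nonneg_of_le t_nonneg
  intro p
  exact key p.1 p.2 _ (sqrt_le_add p.1 p.2)

def fmax : ℕ × ℕ → ℝ := fun p => 1 / ((p.1 : ℝ) * p.2 * (max p.1 p.2 : ℕ))

lemma fmax_nonneg (p : ℕ × ℕ) : 0 ≤ fmax p := by unfold fmax; positivity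

lemma fmax_summable : Summable fmax := by
  apply rr_summable.of_nonneg_of_le fmax_nonneg
  intro p
  exact key p.1 p.2 _ (sqrt_le_max p.1 p.2)

def d : ℕ × ℕ → ℝ := fun p => if p.1 = p.2 then 1 / ((p.1 : ℝ) * p.1 * p.1) else 0
def g : ℕ × ℕ → ℝ := fun p =>
  if p.2 = 0 then 0 else 1 / ((p.1 : ℝ) * ((p.1 : ℝ) + p.2) * ((p.1 : ℝ) + p.2))

def u : ℕ × ℕ → ℝ := fun p => if p.1 < p.2 then 1 / ((p.1 : ℝ) * p.2 * p.2) else 0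

lemma u_nonneg (p : ℕ × ℕ) : 0 ≤ u p := by unfold u; split <;> positivity
lemma d_nonneg (p : ℕ × ℕ) : 0 ≤ d p := by unfold d; split <;> positivity
lemma g_nonneg (p : ℕ × ℕ) : 0 ≤ g p := by unfold g; split <;> positivity

lemma f_split (p : ℕ × ℕ) : fmax p = d p + u p + u p.swap := by
  obtain ⟨m, n⟩ := p
  simp only [fmax, u, d, Prod.swap_prod_mk]
  rcases lt_trichotomy m n with h | h | h
  · rw [max_eq_right h.le, if_neg h.ne, if_pos h, if_neg (by omega : ¬ n < m)]
    ring
  · subst h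
    simp
  · rw [max_eq_left h.le, if_neg (by omega : ¬ m = n), if_neg (by omega : ¬ m < n), if_pos h]
    ring

lemma t_split (p : ℕ × ℕ) : t p = g p + g p.swap := by
  obtain ⟨m, n⟩ := p
  simp only [t, g, Prod.swap_prod_mk]
  rcases Nat.eq_zero_or_pos m with hm | hm
  · subst hm; simp
  rcases Nat.eq_zero_or_pos n with hn | hn
  · subst hn; simp
  have hm' : (0:ℝ) < m := by exact_mod_cast hm
  have hn' : (0:ℝ) < n := by exact_mod_cast hn
  rw [if_neg (by omega), if_neg (by omega)]
  field_simp
  ring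

lemma u_le_f (p : ℕ × ℕ) : u p ≤ fmax p := by
  have := f_split p; have h1 := d_nonneg p; have h2 := u_nonneg p.swap; linarith

lemma uswap_le_f (p : ℕ × ℕ) : u p.swap ≤ fmax p := by
  have := f_split p; have h1 := d_nonneg p; have h2 := u_nonneg p; linarith

lemma d_le_f (p : ℕ × ℕ) : d p ≤ fmax p := by
  have := f_split p; have h1 := u_nonneg p; have h2 := u_nonneg p.swap; linarith

lemma g_le_t (p : ℕ × ℕ) : g p ≤ t p := by
  have := t_split p; have h2 := g_nonneg p.swap; linarith

lemma gswap_le_t (p : ℕ × ℕ) : g p.swap ≤ t p := by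
  have := t_split p; have h2 := g_nonneg p; linarith

lemma tsum_d : ∑' p : ℕ × ℕ, d p = ∑' n : ℕ, 1 / (n : ℝ) ^ 3 := by
  apply tsum_eq_tsum_of_ne_zero_bij (fun x => (x.1, x.1))
  · intro x y h
    exact Subtype.ext (congrArg Prod.fst h)
  · rintro ⟨m, n⟩ hp
    simp only [Function.mem_support] at hp
    have h1 : m = n := by
      by_contra h
      exact hp (if_neg h)
    subst h1
    have h2 : m ≠ 0 := by
      rintro rfl
      exact hp (by norm_num [d])
    have hm : (0:ℝ) < m := by exact_mod_cast Nat.pos_of_ne_zero h2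
    refine ⟨⟨m, ?_⟩, rfl⟩
    simp only [Function.mem_support]
    positivity
  · intro x
    have h : ((x : ℕ) : ℝ) ^ 3 = ((x:ℕ):ℝ) * (x:ℕ) * (x:ℕ) := by ring
    simp [d, h]

lemma tsum_swap (h : ℕ × ℕ → ℝ) : ∑' p : ℕ × ℕ, h p.swap = ∑' p : ℕ × ℕ, h p :=
  (Equiv.prodComm ℕ ℕ).tsum_eq h

lemma tsum_g : ∑' p : ℕ × ℕ, g p = ∑' p : ℕ × ℕ, u p := by
  apply tsum_eq_tsum_of_ne_zero_bij (fun x => ((x : ℕ × ℕ).1, (x : ℕ × ℕ).2 - (x : ℕ × ℕ).1))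
  · rintro ⟨⟨a, c⟩, ha⟩ ⟨⟨a', c'⟩, ha'⟩ h
    simp only [Function.mem_support, u] at ha ha'
    have hlt : a < c := by by_contra hh; exact ha (if_neg hh)
    have hlt' : a' < c' := by by_contra hh; exact ha' (if_neg hh)
    have h' : ((a, c - a) : ℕ × ℕ) = ((a', c' - a') : ℕ × ℕ) := h
    simp only [Prod.mk.injEq] at h'
    obtain ⟨h1, h2⟩ := h'
    apply Subtype.ext
    show ((a, c) : ℕ × ℕ) = (a', c')
    simp only [Prod.mk.injEq]
    exact ⟨h1, by omega⟩
  · rintro ⟨m, k⟩ hp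
    simp only [Function.mem_support, g] at hp
    have hk : k ≠ 0 := by
      rintro rfl
      exact hp (if_pos rfl)
    have hm : m ≠ 0 := by
      rintro rfl
      refine hp ?_
      rw [if_neg hk]
      norm_num
    have hm' : (0:ℝ) < m := by exact_mod_cast Nat.pos_of_ne_zero hm
    have hmk : (0:ℝ) < ((m + k : ℕ) : ℝ) := by
      have : 0 < m + k := by omega
      exact_mod_cast this
    refine ⟨⟨(m, m + k), ?_⟩, ?_⟩
    · simp only [Function.mem_support, u]
      rw [if_pos (by omega)]
      push_cast
      push_cast at hmk
      positivity
    · show ((m, m + k - m) : ℕ × ℕ) = (m, k)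
      congr 1
      omega
  · rintro ⟨⟨a, c⟩, hx⟩
    simp only [Function.mem_support, u] at hx
    have hlt : a < c := by by_contra hh; exact hx (if_neg hh)
    simp only [g, u]
    rw [if_neg (by omega : ¬ c - a = 0), if_pos hlt]
    have : ((a : ℝ) + ((c - a : ℕ) : ℝ)) = (c : ℝ) := by
      have : a + (c - a) = c := by omega
      exact_mod_cast this
    rw [this]

def H (n : ℕ) : ℝ := ∑ m ∈ range n, 1 / (m : ℝ)
def G (n : ℕ) : ℝ := H n * (1 / ((n : ℝ) * n))
def F (n : ℕ) : ℝ := (∑ k ∈ range n, b k) * (1 / ((n : ℝ) * n))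


lemma inner_u (n : ℕ) : ∑' m : ℕ, u (m, n) = G n := by
  rw [tsum_eq_sum (s := range n) (f := fun m => u (m, n))
    (by intro m hm; simp only [u, if_neg (by simpa using hm : ¬ m < n)])]
  unfold G H
  rw [Finset.sum_mul]
  apply Finset.sum_congr rfl
  intro m hm
  simp only [u]
  rw [if_pos (by simpa using hm)]
  rw [div_mul_div_comm, one_mul, mul_assoc]

lemma inner_t (n : ℕ) : ∑' m : ℕ, t (n, m) = F n := by
  rcases Nat.eq_zero_or_pos n with hn | hn
  · subst hn
    simp [t, F]
  have hn' : (0:ℝ) < n := by exact_mod_cast hn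
  have tin : Summable (fun m => t (n, m)) := t_summable.prod_factor n
  rw [Summable.tsum_eq_zero_add tin]
  have h0 : t (n, 0) = 0 := by simp [t]
  rw [h0, zero_add]
  have hpt : ∀ m : ℕ, t (n, m + 1) = (b m - b (m + n)) * (1 / ((n : ℝ) * n)) := by
    intro m
    simp only [t, b]
    push_cast
    have h1 : (n:ℝ) ≠ 0 := hn'.ne'
    have h2 : ((m:ℝ) + 1) ≠ 0 := by positivity
    have h3 : ((n:ℝ) + ((m:ℝ) + 1)) ≠ 0 := by positivity
    have h4 : ((m:ℝ) + 1 + (n:ℝ)) ≠ 0 := by positivity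
    field_simp
    ring
  rw [tsum_congr hpt]
  exact ((telescope n).mul_right _).tsum_eq

lemma F_eq (n : ℕ) : F n = G n + 1 / (n : ℝ) ^ 3 := by
  have hb : (∑ k ∈ range n, b k) = H n + 1 / (n : ℝ) := by
    have h1 := Finset.sum_range_succ' (fun m => 1 / (m : ℝ)) n
    have h2 : ∀ i : ℕ, (1:ℝ) / ((i + 1 : ℕ) : ℝ) = b i := by
      intro i; unfold b; push_cast; ring_nf
    rw [Finset.sum_congr rfl (fun i _ => h2 i)] at h1
    have h3 := Finset.sum_range_succ (fun m => 1 / (m : ℝ)) n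
    unfold H
    rw [← h3, h1]
    norm_num
  unfold F G
  rw [hb, add_mul]
  congr 1
  rw [div_mul_div_comm, one_mul]
  congr 1
  ring

lemma u_summable : Summable u := fmax_summable.of_nonneg_of_le u_nonneg u_le_f
lemma uswap_summable : Summable (fun p : ℕ × ℕ => u p.swap) :=
  fmax_summable.of_nonneg_of_le (fun p => u_nonneg p.swap) uswap_le_f
lemma d_summable : Summable d := fmax_summable.of_nonneg_of_le d_nonneg d_le_f
lemma g_summable : Summable g := t_summable.of_nonneg_of_le g_nonneg g_le_t
lemma gswap_summable : Summable (fun p : ℕ × ℕ => g p.swap) :=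
  t_summable.of_nonneg_of_le (fun p => g_nonneg p.swap) gswap_le_t

lemma z_summable : Summable (fun n : ℕ => 1 / (n : ℝ) ^ 3) :=
  Real.summable_one_div_nat_pow.mpr (by norm_num)

lemma hSG : ∑' p : ℕ × ℕ, u p = ∑' n : ℕ, G n := by
  rw [← tsum_swap u, Summable.tsum_prod uswap_summable]
  exact tsum_congr fun n => inner_u n

lemma G_summable : Summable G := by
  have h := ((summable_prod_of_nonneg (fun p => u_nonneg p.swap)).mp uswap_summable).2
  exact h.congr fun n => inner_u n

lemma tsum_t_eq : ∑' p : ℕ × ℕ, t p = (∑' n : ℕ, G n) + ∑' n : ℕ, 1 / (n : ℝ) ^ 3 := by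
  rw [Summable.tsum_prod t_summable]
  rw [tsum_congr inner_t, tsum_congr F_eq]
  exact Summable.tsum_add G_summable z_summable

lemma tsum_t_eq' : ∑' p : ℕ × ℕ, t p = (∑' p : ℕ × ℕ, u p) + ∑' p : ℕ × ℕ, u p := by
  rw [tsum_congr t_split, Summable.tsum_add g_summable gswap_summable, tsum_swap g, tsum_g]

lemma S_eq_Z : ∑' p : ℕ × ℕ, u p = ∑' n : ℕ, 1 / (n : ℝ) ^ 3 := by
  have h1 := tsum_t_eq
  have h2 := tsum_t_eq'
  rw [hSG] at h2 ⊢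
  linarith

lemma tsum_fmax : ∑' p : ℕ × ℕ, fmax p = 3 * ∑' n : ℕ, 1 / (n : ℝ) ^ 3 := by
  rw [tsum_congr f_split, Summable.tsum_add (d_summable.add u_summable) uswap_summable,
    Summable.tsum_add d_summable u_summable, tsum_d, tsum_swap u, S_eq_Z]
  ring

end DSM
end

theorem double_sum_max_eq_three_zeta_three :
    ∑' p : ℕ × ℕ, (1 : ℝ) / ((p.1 : ℝ) * p.2 * max p.1 p.2) =
      3 * ∑' n : ℕ, (1 : ℝ) / (n : ℝ) ^ 3 := by
  have h : (fun p : ℕ × ℕ => (1 : ℝ) / ((p.1 : ℝ) * p.2 * max p.1 p.2)) = DSM.fmax := by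
    funext p
    simp [DSM.fmax, Nat.cast_max]
  rw [h]
  exact DSM.tsum_fmax
end

section
/- For every positive integer n, ∑_{k=1}^n gcd(k,n)/lcm(k,n) = (1/n)·∑_{d∣n} (J_2(d)/d)·H_{n/d}, where J_2(d) = ∑_{e∣d} e²μ(d/e) is the Jordan totient of order 2 and H_m is the m-th harmonic number. -/
/-! Since `gcd k n * lcm k n = k * n`, the summand is `gcd(k,n)² / (k n)`, and
`gcd(k,n)² = ∑_{d ∣ gcd(k,n)} J₂(d)` by Möbius inversion. Interchanging the sums, the
multiples `k = d j ≤ n` of a divisor `d` contribute `J₂(d) / (d n) · H_{n/d}`. -/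

open Finset ArithmeticFunction
open scoped ArithmeticFunction.Moebius

def jordanTotient (k d : ℕ) : ℤ := ∑ e ∈ d.divisors, (e : ℤ) ^ k * μ (d / e)

theorem sum_divisors_jordanTotient (k : ℕ) {m : ℕ} (hm : 0 < m) :
    ∑ d ∈ m.divisors, jordanTotient k d = (m : ℤ) ^ k := by
  refine (sum_eq_iff_sum_smul_moebius_eq (g := fun m => (m : ℤ) ^ k)).mpr (fun d _ => ?_) m hm
  rw [jordanTotient, Nat.sum_divisorsAntidiagonal' (f := fun a b => μ a • (b : ℤ) ^ k)]
  exact sum_congr rfl fun _ _ => mul_comm _ _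

theorem Nat.cast_gcd_div_cast_lcm {K : Type*} [Field K] [CharZero K] (k n : ℕ) :
    (k.gcd n : K) / k.lcm n = (k.gcd n : K) ^ 2 / (k * n) := by
  rcases Nat.eq_zero_or_pos (k.gcd n) with hg | hg
  · simp [hg]
  have hkn : (k : K) * n = k.gcd n * k.lcm n := by exact_mod_cast (Nat.gcd_mul_lcm k n).symm
  rw [hkn, sq, mul_div_mul_left _ _ (Nat.cast_ne_zero.2 hg.ne')]

theorem Nat.sum_Icc_filter_dvd {M : Type*} [AddCommMonoid M] {d : ℕ} (hd : 0 < d) (n : ℕ)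
    (f : ℕ → M) : ∑ k ∈ Icc 1 n with d ∣ k, f k = ∑ j ∈ Icc 1 (n / d), f (d * j) := by
  have hmultiples : {k ∈ Icc 1 n | d ∣ k} = (Icc 1 (n / d)).image (d * ·) := by
    ext k
    simp only [mem_filter, mem_Icc, mem_image]
    constructor
    · rintro ⟨⟨hk1, hkn⟩, j, rfl⟩
      exact ⟨j, ⟨Nat.pos_of_mul_pos_left hk1, (Nat.le_div_iff_mul_le hd).2 (by linarith)⟩, rfl⟩
    · rintro ⟨j, ⟨hj1, hjn⟩, rfl⟩
      exact ⟨⟨Nat.mul_pos hd hj1, mul_comm j d ▸ Nat.mul_le_of_le_div d j n hjn⟩, dvd_mul_right d j⟩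
  rw [hmultiples, sum_image fun _ _ _ _ h => Nat.eq_of_mul_eq_mul_left hd h]

theorem Nat.sum_Icc_sum_divisors_gcd {M : Type*} [AddCommMonoid M] (n : ℕ) (F : ℕ → ℕ → M) :
    ∑ k ∈ Icc 1 n, ∑ d ∈ (k.gcd n).divisors, F d k =
      ∑ d ∈ n.divisors, ∑ j ∈ Icc 1 (n / d), F d (d * j) := by
  rw [sum_comm' (t' := n.divisors) (s' := fun d => {k ∈ Icc 1 n | d ∣ k})]
  · exact sum_congr rfl fun d hd => Nat.sum_Icc_filter_dvd (Nat.pos_of_mem_divisors hd) n _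
  · intro k d
    simp only [mem_Icc, mem_filter, Nat.mem_divisors, Nat.dvd_gcd_iff]
    constructor
    · rintro ⟨hk, ⟨hdk, hdn⟩, -⟩
      exact ⟨⟨hk, hdk⟩, hdn, by omega⟩
    · rintro ⟨⟨hk, hdk⟩, hdn, -⟩
      exact ⟨hk, ⟨hdk, hdn⟩, Nat.gcd_ne_zero_left (by omega)⟩

theorem gcd_div_lcm_sum_eq_general (n : ℕ) :
    ∑ k ∈ Finset.Icc 1 n, (Nat.gcd k n : ℝ) / Nat.lcm k n =
      (1 / (n : ℝ)) * ∑ d ∈ n.divisors,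
        ((∑ e ∈ d.divisors, ((e : ℤ) ^ 2 * ArithmeticFunction.moebius (d / e)) : ℤ) : ℝ) / d *
          ∑ j ∈ Finset.Icc 1 (n / d), (1 : ℝ) / j := by
  calc ∑ k ∈ Icc 1 n, (k.gcd n : ℝ) / k.lcm n
      = ∑ k ∈ Icc 1 n, ∑ d ∈ (k.gcd n).divisors, (jordanTotient 2 d : ℝ) / (k * n) := by
        refine sum_congr rfl fun k hk => ?_
        have hg : 0 < k.gcd n := Nat.gcd_pos_of_pos_left n (mem_Icc.1 hk).1
        rw [Nat.cast_gcd_div_cast_lcm, ← sum_div, ← Int.cast_sum,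
          sum_divisors_jordanTotient 2 hg, Int.cast_pow, Int.cast_natCast]
    _ = ∑ d ∈ n.divisors, ∑ j ∈ Icc 1 (n / d), (jordanTotient 2 d : ℝ) / ((d * j : ℕ) * n) :=
        Nat.sum_Icc_sum_divisors_gcd n _
    _ = _ := by
        simp only [mul_sum, jordanTotient, Nat.cast_mul]
        refine sum_congr rfl fun d _ => sum_congr rfl fun j _ => ?_
        ring

theorem gcd_div_lcm_sum_eq (n : ℕ) (hn : 0 < n) :
    ∑ k ∈ Finset.Icc 1 n, (Nat.gcd k n : ℝ) / Nat.lcm k n =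
      (1 / (n : ℝ)) * ∑ d ∈ n.divisors,
        ((∑ e ∈ d.divisors, ((e : ℤ) ^ 2 * ArithmeticFunction.moebius (d / e)) : ℤ) : ℝ) / d *
          ∑ j ∈ Finset.Icc 1 (n / d), (1 : ℝ) / j :=
  gcd_div_lcm_sum_eq_general n
end

section
/- For any fixed integer k ≥ 3, the sum V_k(x) := ∑_{n_1,…,n_k ≤ x} (n_1⋯n_k)/lcm(n_1,…,n_k) satisfies x^k ≪ V_k(x) ≪ x^k (log x)^{2^k−2} as x → ∞. -/
/-!
Every tuple `t` of positive integers has a Venn decomposition `t i = ∏_{S ∋ i} d S` over the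
subsets `S` of the index set with `∏_S d S = lcm t`: at each prime `p`, the exponent vector
`(v_p (t i))_i` is cut into horizontal layers, and the layer at height `j` goes to the set of
indices whose exponent is at least `j`. Hence `(∏ t i) / lcm t = ∏_S (d S) ^ (#S - 1)`.
Only the parts `d S` with `#S ≥ 2` enter this weight; recording them, each at most `N`, the
tuples with given parts number at most `N ^ k / ∏_S (d S) ^ #S`, so the sum is at most
`N ^ k ∏_{#S ≥ 2} ∑_{d ≤ N} 1 / d = N ^ k H_N ^ (2 ^ k - k - 1)`.
The lower bound is trivial, since every term is at least `1`.
-/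

open Finset

section LayerCake

variable {ι : Type*} [Fintype ι]

def superlevel (a : ι → ℕ) (j : ℕ) : Finset ι := {i | j ≤ a i}

variable [DecidableEq ι]

def layerCount (a : ι → ℕ) (S : Finset ι) : ℕ :=
  #{j ∈ Icc 1 (univ.sup a) | superlevel a j = S}

lemma sum_layerCount (a : ι → ℕ) (T : Finset (Finset ι)) :
    ∑ S ∈ T, layerCount a S = #{j ∈ Icc 1 (univ.sup a) | superlevel a j ∈ T} := by
  rw [card_eq_sum_card_fiberwise (f := superlevel a) (t := T)
    (s := {j ∈ Icc 1 (univ.sup a) | superlevel a j ∈ T}) fun j hj ↦ mem_coe.2 (mem_filter.1 hj).2]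
  refine sum_congr rfl fun S hS ↦ congrArg card ?_
  ext j
  simp only [mem_filter]
  exact ⟨fun h ↦ ⟨⟨h.1, h.2 ▸ hS⟩, h.2⟩, fun h ↦ ⟨h.1.1, h.2⟩⟩

lemma sum_layerCount_filter_mem (a : ι → ℕ) (i : ι) :
    ∑ S with i ∈ S, layerCount a S = a i := by
  have hlevels : {j ∈ Icc 1 (univ.sup a) | i ∈ superlevel a j} = Icc 1 (a i) := by
    ext j
    simp only [superlevel, mem_filter, mem_univ, true_and, mem_Icc]
    exact ⟨fun h ↦ ⟨h.1.1, h.2⟩, fun h ↦ ⟨⟨h.1, h.2.trans (le_sup (mem_univ i))⟩, h.2⟩⟩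
  simp only [sum_layerCount, mem_filter, mem_univ, true_and]
  rw [hlevels, Nat.card_Icc, Nat.add_sub_cancel]

lemma sum_layerCount_univ (a : ι → ℕ) : ∑ S, layerCount a S = univ.sup a := by
  simp [sum_layerCount]

lemma layerCount_empty (a : ι → ℕ) : layerCount a ∅ = 0 := by
  rw [layerCount, card_eq_zero, filter_eq_empty_iff]
  intro j hj
  obtain ⟨i, -, hi⟩ := (Finset.le_sup_iff (mem_Icc.1 hj).1).1 (mem_Icc.1 hj).2
  exact ne_empty_of_mem (s := superlevel a j) (a := i) (by simpa [superlevel] using hi)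

end LayerCake

section VennDecomposition

variable {ι : Type*} [Fintype ι] [DecidableEq ι]

def vennProd (r : Finset ι → ℕ) (i : ι) : ℕ := ∏ S with i ∈ S, r S

def vennPart (t : ι → ℕ) (S : Finset ι) : ℕ :=
  ∏ p ∈ (univ.lcm t).primeFactors, p ^ layerCount (fun i ↦ (t i).factorization p) S

lemma vennPart_empty (t : ι → ℕ) : vennPart t ∅ = 1 := by
  simp [vennPart, layerCount_empty]

lemma vennPart_pos (t : ι → ℕ) (S : Finset ι) : 0 < vennPart t S :=
  prod_pos fun _ hp ↦ pow_pos (Nat.prime_of_mem_primeFactors hp).pos _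

lemma vennProd_vennPart {t : ι → ℕ} (ht : ∀ i, t i ≠ 0) (i : ι) :
    vennProd (vennPart t) i = t i := by
  simp_rw [vennProd, vennPart, prod_comm (s := filter _ _), prod_pow_eq_pow_sum,
    sum_layerCount_filter_mem]
  rw [← Finsupp.prod_of_support_subset _
    (Nat.primeFactors_mono (dvd_lcm (mem_univ i)) (lcm_ne_zero_iff.2 fun i _ ↦ ht i)) _
    fun _ _ ↦ pow_zero _]
  exact Nat.prod_factorization_pow_eq_self (ht i)

lemma prod_vennPart {t : ι → ℕ} (ht : ∀ i, t i ≠ 0) : ∏ S, vennPart t S = univ.lcm t := by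
  simp_rw [vennPart, prod_comm (s := univ), prod_pow_eq_pow_sum, sum_layerCount_univ,
    ← Finset.factorization_lcm fun i _ ↦ ht i]
  exact (Nat.prod_primeFactors_pow_factorization (lcm_ne_zero_iff.2 fun i _ ↦ ht i)).symm

lemma vennPart_dvd {t : ι → ℕ} (ht : ∀ i, t i ≠ 0) {S : Finset ι} {i : ι} (hi : i ∈ S) :
    vennPart t S ∣ t i :=
  vennProd_vennPart ht i ▸ dvd_prod_of_mem _ (by simpa using hi)

end VennDecomposition

section VennWeight

variable {ι : Type*} [Fintype ι]

/-- The exponent is an integer, so that the empty set contributes `(r ∅)⁻¹`. -/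
noncomputable def vennWeight (r : Finset ι → ℕ) : ℝ := ∏ S, (r S : ℝ) ^ ((#S : ℤ) - 1)

lemma vennWeight_nonneg (r : Finset ι → ℕ) : 0 ≤ vennWeight r :=
  prod_nonneg fun _ _ ↦ zpow_nonneg (Nat.cast_nonneg _) _

def vennTrunc (r : Finset ι → ℕ) (S : Finset ι) : ℕ := if 2 ≤ #S then r S else 1

lemma vennWeight_vennTrunc {r : Finset ι → ℕ} (h : r ∅ = 1) :
    vennWeight (vennTrunc r) = vennWeight r := by
  refine prod_congr rfl fun S _ ↦ ?_
  rw [vennTrunc]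
  split_ifs with hS
  · rfl
  · obtain hS | hS : #S = 0 ∨ #S = 1 := by omega
    · simp [card_eq_zero.1 hS, h]
    · simp [hS]

variable [DecidableEq ι]

lemma prod_prod_filter_mem {M : Type*} [CommMonoid M] (c : Finset ι → M) :
    ∏ i, ∏ S with i ∈ S, c S = ∏ S, c S ^ #S := by
  rw [prod_comm' (t' := univ) (s' := fun S ↦ S) (by simp)]
  simp

lemma prod_vennProd (r : Finset ι → ℕ) : ∏ i, (vennProd r i : ℝ) = ∏ S, (r S : ℝ) ^ #S := by
  simp only [vennProd, Nat.cast_prod]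
  exact prod_prod_filter_mem _

lemma prod_div_lcm_eq_vennWeight {t : ι → ℕ} (ht : ∀ i, t i ≠ 0) :
    (∏ i, (t i : ℝ)) / (univ.lcm t : ℕ) = vennWeight (vennPart t) := by
  have hprod : ∏ i, (t i : ℝ) = ∏ S, (vennPart t S : ℝ) ^ #S := by
    simp only [← prod_vennProd, vennProd_vennPart ht]
  rw [hprod, ← prod_vennPart ht, Nat.cast_prod, ← prod_div_distrib, vennWeight]
  refine prod_congr rfl fun S _ ↦ ?_
  rw [zpow_sub_one₀ (Nat.cast_ne_zero.2 (vennPart_pos t S).ne'), zpow_natCast, div_eq_mul_inv]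

lemma vennProd_vennTrunc_dvd (r : Finset ι → ℕ) (i : ι) :
    vennProd (vennTrunc r) i ∣ vennProd r i :=
  prod_dvd_prod_of_dvd _ _ fun S _ ↦ by
    rw [vennTrunc]
    split_ifs
    exacts [dvd_rfl, one_dvd _]

lemma card_filter_vennProd_dvd (N : ℕ) (r : Finset ι → ℕ) :
    #{t ∈ Fintype.piFinset fun _ : ι ↦ Icc 1 N | ∀ i, vennProd r i ∣ t i} =
      ∏ i, N / vennProd r i := by
  have hfilter : {t ∈ Fintype.piFinset fun _ : ι ↦ Icc 1 N | ∀ i, vennProd r i ∣ t i} =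
      Fintype.piFinset fun i ↦ {n ∈ Ioc 0 N | vennProd r i ∣ n} := by
    ext t
    simp only [mem_filter, Fintype.mem_piFinset, ← Icc_add_one_left_eq_Ioc, zero_add]
    exact ⟨fun h i ↦ ⟨h.1 i, h.2 i⟩, fun h ↦ ⟨fun i ↦ (h i).1, fun i ↦ (h i).2⟩⟩
  simp only [hfilter, Fintype.card_piFinset, Nat.Ioc_filter_dvd_card_eq_div]

lemma card_filter_vennProd_dvd_mul_vennWeight_le (N : ℕ) {r : Finset ι → ℕ}
    (hr : ∀ S, r S ≠ 0) :
    (#{t ∈ Fintype.piFinset fun _ : ι ↦ Icc 1 N | ∀ i, vennProd r i ∣ t i} : ℝ) *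
        vennWeight r ≤ N ^ Fintype.card ι * ∏ S, (r S : ℝ)⁻¹ := by
  have hcount : (#{t ∈ Fintype.piFinset fun _ : ι ↦ Icc 1 N | ∀ i, vennProd r i ∣ t i} : ℝ) ≤
      ∏ i, (N : ℝ) / vennProd r i := by
    rw [card_filter_vennProd_dvd, Nat.cast_prod]
    exact prod_le_prod (fun _ _ ↦ Nat.cast_nonneg _) fun _ _ ↦ Nat.cast_div_le
  refine (mul_le_mul_of_nonneg_right hcount (vennWeight_nonneg r)).trans_eq ?_
  rw [prod_div_distrib, prod_const, card_univ, prod_vennProd, vennWeight, div_mul_eq_mul_div,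
    mul_div_assoc, ← prod_div_distrib]
  refine congrArg _ (prod_congr rfl fun S _ ↦ ?_)
  rw [zpow_sub_one₀ (Nat.cast_ne_zero.2 (hr S)), zpow_natCast]
  field_simp [pow_ne_zero _ (Nat.cast_ne_zero.2 (hr S) : (r S : ℝ) ≠ 0)]

end VennWeight

section VennBox

variable {ι : Type*} [Fintype ι] [DecidableEq ι]

def vennBox (N : ℕ) (S : Finset ι) : Finset ℕ := if 2 ≤ #S then Icc 1 N else {1}

lemma ne_zero_of_mem_piFinset_vennBox {N : ℕ} {r : Finset ι → ℕ}
    (hr : r ∈ Fintype.piFinset (vennBox N)) (S : Finset ι) : r S ≠ 0 := by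
  have hS := Fintype.mem_piFinset.1 hr S
  rw [vennBox] at hS
  split_ifs at hS
  · exact Nat.one_le_iff_ne_zero.1 (mem_Icc.1 hS).1
  · simp [mem_singleton.1 hS]

lemma ne_zero_of_mem_piFinset_Icc {N : ℕ} {t : ι → ℕ}
    (ht : t ∈ Fintype.piFinset fun _ : ι ↦ Icc 1 N) (i : ι) : t i ≠ 0 :=
  Nat.one_le_iff_ne_zero.1 (mem_Icc.1 (Fintype.mem_piFinset.1 ht i)).1

lemma vennTrunc_vennPart_mem_piFinset_vennBox {N : ℕ} {t : ι → ℕ}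
    (ht : t ∈ Fintype.piFinset fun _ : ι ↦ Icc 1 N) :
    vennTrunc (vennPart t) ∈ Fintype.piFinset (vennBox N) := by
  refine Fintype.mem_piFinset.2 fun S ↦ ?_
  rw [vennBox, vennTrunc]
  split_ifs with hS
  · obtain ⟨i, hi⟩ := card_pos.1 (by omega : 0 < #S)
    have hle := Nat.le_of_dvd (Nat.pos_of_ne_zero (ne_zero_of_mem_piFinset_Icc ht i))
      (vennPart_dvd (ne_zero_of_mem_piFinset_Icc ht) hi)
    exact mem_Icc.2 ⟨vennPart_pos t S, hle.trans (mem_Icc.1 (Fintype.mem_piFinset.1 ht i)).2⟩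
  · exact mem_singleton_self 1

lemma sum_prod_inv_vennBox (N : ℕ) :
    ∑ r ∈ Fintype.piFinset (vennBox N), ∏ S : Finset ι, (r S : ℝ)⁻¹ =
      harmonic N ^ #{S : Finset ι | 2 ≤ #S} := by
  rw [← prod_univ_sum (κ := fun _ ↦ ℕ) (vennBox N) fun _ j ↦ (j : ℝ)⁻¹]
  simp only [vennBox, apply_ite (fun s : Finset ℕ ↦ ∑ j ∈ s, (j : ℝ)⁻¹), sum_singleton,
    Nat.cast_one, inv_one, prod_ite, prod_const_one, mul_one, prod_const,
    harmonic_eq_sum_Icc, Rat.cast_sum, Rat.cast_inv, Rat.cast_natCast]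

end VennBox

noncomputable def lcmRatioSum (ι : Type*) [Fintype ι] [DecidableEq ι] (N : ℕ) : ℝ :=
  ∑ t ∈ Fintype.piFinset fun _ : ι ↦ Icc 1 N, (∏ i, (t i : ℝ)) / (univ.lcm t : ℕ)

section Bounds

variable {ι : Type*} [Fintype ι]

lemma one_le_prod_div_lcm {t : ι → ℕ} (ht : ∀ i, t i ≠ 0) :
    1 ≤ (∏ i, (t i : ℝ)) / (univ.lcm t : ℕ) := by
  rw [one_le_div (Nat.cast_pos.2 (Nat.pos_of_ne_zero (lcm_ne_zero_iff.2 fun i _ ↦ ht i))),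
    ← Nat.cast_prod, Nat.cast_le]
  exact Nat.le_of_dvd (prod_pos fun i _ ↦ Nat.pos_of_ne_zero (ht i)) (lcm_dvd_prod _ _)

lemma card_filter_two_le_card_le : #{S : Finset ι | 2 ≤ #S} ≤ 2 ^ Fintype.card ι - 2 := by
  classical
  rcases isEmpty_or_nonempty ι with hι | ⟨⟨i⟩⟩
  · simp [Finset.eq_empty_of_isEmpty]
  · have hsmall : 2 ≤ #{S : Finset ι | ¬ 2 ≤ #S} := by
      have hsub : ({∅, {i}} : Finset (Finset ι)) ⊆ ({S | ¬ 2 ≤ #S} : Finset (Finset ι)) := by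
        intro S hS
        rcases mem_insert.1 hS with rfl | hS <;> simp_all
      simpa using card_le_card hsub
    have := card_filter_add_card_filter_not (s := (univ : Finset (Finset ι))) (2 ≤ #·)
    rw [card_univ, Fintype.card_finset] at this
    omega

variable [DecidableEq ι]

lemma pow_card_le_lcmRatioSum (N : ℕ) : (N : ℝ) ^ Fintype.card ι ≤ lcmRatioSum ι N := by
  have hsum := card_nsmul_le_sum (Fintype.piFinset fun _ : ι ↦ Icc 1 N) _ 1
    fun t ht ↦ one_le_prod_div_lcm (ne_zero_of_mem_piFinset_Icc ht)
  rw [lcmRatioSum]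
  simpa using hsum

lemma lcmRatioSum_le (N : ℕ) :
    lcmRatioSum ι N ≤ N ^ Fintype.card ι * harmonic N ^ #{S : Finset ι | 2 ≤ #S} := by
  set A := Fintype.piFinset fun _ : ι ↦ Icc 1 N
  calc lcmRatioSum ι N
      ≤ ∑ t ∈ A, ∑ r ∈ Fintype.piFinset (vennBox N) with ∀ i, vennProd r i ∣ t i,
          vennWeight r := by
        refine sum_le_sum fun t ht ↦ ?_
        have ht0 := ne_zero_of_mem_piFinset_Icc ht
        rw [prod_div_lcm_eq_vennWeight ht0, ← vennWeight_vennTrunc (vennPart_empty t)]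
        refine single_le_sum (fun r _ ↦ vennWeight_nonneg r) (mem_filter.2
          ⟨vennTrunc_vennPart_mem_piFinset_vennBox ht, fun i ↦ ?_⟩)
        exact vennProd_vennPart ht0 i ▸ vennProd_vennTrunc_dvd _ i
    _ = ∑ r ∈ Fintype.piFinset (vennBox N),
          (#{t ∈ A | ∀ i, vennProd r i ∣ t i} : ℝ) * vennWeight r := by
        simp only [sum_filter]
        rw [sum_comm]
        simp [← sum_filter, sum_const]
    _ ≤ ∑ r ∈ Fintype.piFinset (vennBox N), (N : ℝ) ^ Fintype.card ι * ∏ S, (r S : ℝ)⁻¹ :=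
        sum_le_sum fun r hr ↦
          card_filter_vennProd_dvd_mul_vennWeight_le N (ne_zero_of_mem_piFinset_vennBox hr)
    _ = N ^ Fintype.card ι * harmonic N ^ #{S : Finset ι | 2 ≤ #S} := by
        rw [← mul_sum, sum_prod_inv_vennBox]

end Bounds

lemma half_le_natFloor {x : ℝ} (hx : 1 ≤ x) : x / 2 ≤ ⌊x⌋₊ := by
  have : (1 : ℝ) ≤ ⌊x⌋₊ := by exact_mod_cast (Nat.one_le_floor_iff x).2 hx
  linarith [Nat.lt_floor_add_one x]

lemma harmonic_natFloor_le_two_mul_log {x : ℝ} (hx : Real.exp 1 ≤ x) :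
    (harmonic ⌊x⌋₊ : ℝ) ≤ 2 * Real.log x := by
  have hlog : 1 ≤ Real.log x := (Real.le_log_iff_exp_le ((Real.exp_pos 1).trans_le hx)).2 hx
  have hN : (1 : ℝ) ≤ ⌊x⌋₊ := by
    exact_mod_cast (Nat.one_le_floor_iff x).2 ((Real.one_lt_exp_iff.2 one_pos).le.trans hx)
  linarith [harmonic_le_one_add_log ⌊x⌋₊,
    Real.log_le_log (by positivity) (Nat.floor_le ((Real.exp_pos 1).le.trans hx))]

open Filter in
theorem V_k_order_of_magnitude_general (k : ℕ) :
    ∃ c C : ℝ, 0 < c ∧ 0 < C ∧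
      ∀ᶠ x : ℝ in atTop,
        c * x ^ k ≤
          (∑ t ∈ Fintype.piFinset fun _ : Fin k => Finset.Icc 1 ⌊x⌋₊,
            (∏ i, (t i : ℝ)) / (Finset.univ.lcm t : ℕ)) ∧
        (∑ t ∈ Fintype.piFinset fun _ : Fin k => Finset.Icc 1 ⌊x⌋₊,
            (∏ i, (t i : ℝ)) / (Finset.univ.lcm t : ℕ)) ≤
          C * x ^ k * (Real.log x) ^ (2 ^ k - 2) := by
  refine ⟨(1 / 2) ^ k, 2 ^ (2 ^ k - 2), by positivity, by positivity, ?_⟩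
  filter_upwards [eventually_ge_atTop (Real.exp 1)] with x hx
  have hlog : 1 ≤ Real.log x := (Real.le_log_iff_exp_le ((Real.exp_pos 1).trans_le hx)).2 hx
  have hx1 : 1 ≤ x := (Real.one_lt_exp_iff.2 one_pos).le.trans hx
  have hH0 : (0 : ℝ) ≤ harmonic ⌊x⌋₊ := Rat.cast_nonneg.2 (by rw [harmonic_eq_sum_Icc]; positivity)
  have hm : #{S : Finset (Fin k) | 2 ≤ #S} ≤ 2 ^ k - 2 := by
    simpa using card_filter_two_le_card_le (ι := Fin k)
  refine ⟨?_, ?_⟩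
  · calc (1 / 2) ^ k * x ^ k = (x / 2) ^ k := by ring
      _ ≤ (⌊x⌋₊ : ℝ) ^ k := pow_le_pow_left₀ (by linarith) (half_le_natFloor hx1) k
      _ ≤ lcmRatioSum (Fin k) ⌊x⌋₊ := by simpa using pow_card_le_lcmRatioSum (ι := Fin k) ⌊x⌋₊
  · calc lcmRatioSum (Fin k) ⌊x⌋₊
        ≤ (⌊x⌋₊ : ℝ) ^ k * harmonic ⌊x⌋₊ ^ #{S : Finset (Fin k) | 2 ≤ #S} := by
          simpa using lcmRatioSum_le (ι := Fin k) ⌊x⌋₊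
      _ ≤ x ^ k * (2 * Real.log x) ^ (2 ^ k - 2) :=
          mul_le_mul (pow_le_pow_left₀ (Nat.cast_nonneg _) (Nat.floor_le (by linarith)) k)
            ((pow_le_pow_left₀ hH0 (harmonic_natFloor_le_two_mul_log hx) _).trans
              (pow_le_pow_right₀ (by linarith) hm))
            (by positivity) (by positivity)
      _ = 2 ^ (2 ^ k - 2) * x ^ k * Real.log x ^ (2 ^ k - 2) := by ring

open Filter in
theorem V_k_order_of_magnitude (k : ℕ) (hk : 3 ≤ k) :
    ∃ c C : ℝ, 0 < c ∧ 0 < C ∧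
      ∀ᶠ x : ℝ in atTop,
        c * x ^ k ≤
          (∑ t ∈ Fintype.piFinset fun _ : Fin k => Finset.Icc 1 ⌊x⌋₊,
            (∏ i, (t i : ℝ)) / (Finset.univ.lcm t : ℕ)) ∧
        (∑ t ∈ Fintype.piFinset fun _ : Fin k => Finset.Icc 1 ⌊x⌋₊,
            (∏ i, (t i : ℝ)) / (Finset.univ.lcm t : ℕ)) ≤
          C * x ^ k * (Real.log x) ^ (2 ^ k - 2) :=
  V_k_order_of_magnitude_general k
end
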